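/- Let Φ be a crystallographic root system. If R and S are Φ-posets (antisymmetric closed subsets of Φ), then their meet ncd( cl(R⁺ ∪ S⁺) ⊔ (R⁻ ∩ S⁻) ) and join pcd( (R⁺ ∩ S⁺) ⊔ cl(R⁻ ∪ S⁻) ) in the lattice of closed subsets are again antisymmetric. Hence the Φ-posets form a sublattice of the weak order on closed subsets of Φ. -/

import Mathlib

open Pointwise

structure RootSys (V : Type*) [NormedAddCommGroup V] [InnerProductSpace ℝ V] where
  Φ : Set V
  finite : Φ.Finite
  nonzero : ∀ α ∈ Φ, α ≠ (0 : V)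
  line : ∀ α ∈ Φ, Φ ∩ {x : V | ∃ t : ℝ, x = t • α} = {α, -α}
  reflect : ∀ α ∈ Φ, ∀ β ∈ Φ, β - (2 * (inner ℝ α β : ℝ) / (inner ℝ α α : ℝ)) • α ∈ Φ

variable {V : Type*} [NormedAddCommGroup V] [InnerProductSpace ℝ V]

/-- `Φ` is crystallographic: `⟨α^∨, β⟩ ∈ ℤ` for all roots `α, β`. -/
def RootSys.IsCrystallographic (R : RootSys V) : Prop :=
  ∀ α ∈ R.Φ, ∀ β ∈ R.Φ, ∃ n : ℤ, 2 * (inner ℝ α β : ℝ) / (inner ℝ α α : ℝ) = (n : ℝ)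

/-- A subset `S ⊆ Φ` is closed if it is stable under sums of two elements staying in `Φ`. -/
def RootSys.IsClosedSubset (R : RootSys V) (S : Set V) : Prop :=
  ∀ α ∈ S, ∀ β ∈ S, α + β ∈ R.Φ → α + β ∈ S

/-- A set of roots is antisymmetric if it never contains both `α` and `-α`. -/
def IsAntisymSet (S : Set V) : Prop := ∀ α ∈ S, -α ∉ S

/-- A `Φ`-poset: an antisymmetric closed subset of `Φ`. -/
def RootSys.IsPoset (R : RootSys V) (S : Set V) : Prop :=
  S ⊆ R.Φ ∧ IsAntisymSet S ∧ R.IsClosedSubset S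

/-- Closure: roots that are nonnegative integer combinations (multiset sums) of elements of `T`. -/
def RootSys.clos (R : RootSys V) (T : Set V) : Set V :=
  {γ ∈ R.Φ | ∃ M : Multiset V, (∀ x ∈ M, x ∈ T) ∧ M.sum = γ}

/-- Nonnegative integer combinations (multiset sums) of elements of `T`. -/
def nncomb (T : Set V) : Set V :=
  {v | ∃ M : Multiset V, (∀ x ∈ M, x ∈ T) ∧ M.sum = v}

/-- A root system equipped with a generic linear functional determining positive roots. -/
structure PosRootSys (V : Type*) [NormedAddCommGroup V] [InnerProductSpace ℝ V]
    extends RootSys V where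
  f : V →ₗ[ℝ] ℝ
  generic : ∀ α ∈ Φ, f α ≠ 0

def PosRootSys.Pos (P : PosRootSys V) : Set V := {α ∈ P.Φ | 0 < P.f α}

def PosRootSys.Neg (P : PosRootSys V) : Set V := {α ∈ P.Φ | P.f α < 0}

/-- The weak order: `R ≼ S` iff `R⁺ ⊇ S⁺` and `R⁻ ⊆ S⁻`. -/
def PosRootSys.wle (P : PosRootSys V) (R S : Set V) : Prop :=
  S ∩ P.Pos ⊆ R ∩ P.Pos ∧ R ∩ P.Neg ⊆ S ∩ P.Neg

/-- `R` is semiclosed if both `R⁺` and `R⁻` are closed. -/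
def PosRootSys.SemiClosed (P : PosRootSys V) (S : Set V) : Prop :=
  S ⊆ P.Φ ∧ P.toRootSys.IsClosedSubset (S ∩ P.Pos) ∧
    P.toRootSys.IsClosedSubset (S ∩ P.Neg)

/-- Negative closure deletion. -/
def PosRootSys.ncd (P : PosRootSys V) (S : Set V) : Set V :=
  S \ {α | α ∈ S ∩ P.Neg ∧ ∃ X : Finset V, ↑X ⊆ S ∩ P.Pos ∧ α + X.sum id ∈ P.Φ \ S}

/-- Positive closure deletion. -/
def PosRootSys.pcd (P : PosRootSys V) (S : Set V) : Set V :=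
  S \ {α | α ∈ S ∩ P.Pos ∧ ∃ X : Finset V, ↑X ⊆ S ∩ P.Neg ∧ α + X.sum id ∈ P.Φ \ S}

/-- Meet formula on closed subsets. -/
def PosRootSys.wmeet (P : PosRootSys V) (R S : Set V) : Set V :=
  P.ncd (P.toRootSys.clos ((R ∪ S) ∩ P.Pos) ∪ ((R ∩ S) ∩ P.Neg))

/-- Join formula on closed subsets. -/
def PosRootSys.wjoin (P : PosRootSys V) (R S : Set V) : Set V :=
  P.pcd (((R ∩ S) ∩ P.Pos) ∪ P.toRootSys.clos ((R ∪ S) ∩ P.Neg))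

/-! The involution `f ↦ -f` of the positive system swaps `Φ⁺` and `Φ⁻`, `ncd` and `pcd`, and
meet and join, so only the meet needs an argument. If both `α ∈ Φ⁻` and `-α` lie in the meet,
then `α ∈ R ∩ S` and `-α` is a sum of roots of `(R ∪ S)⁺`. Some summand `β` makes an acute angle
with `-α`, so in a crystallographic root system either `-α = β`, contradicting antisymmetry, or
`δ = -α - β` is a root of the closure; then `α + δ = -β` is a root outside the set, and `ncd`
deletes `α`. -/

namespace RootSys

variable (Rt : RootSys V) {α β γ : V}

lemma neg_mem (hα : α ∈ Rt.Φ) : -α ∈ Rt.Φ := by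
  have h : -α ∈ Rt.Φ ∩ {x : V | ∃ t : ℝ, x = t • α} := by
    rw [Rt.line α hα]; exact Or.inr rfl
  exact h.1

lemma inner_lt_norm_mul_norm (hα : α ∈ Rt.Φ) (hβ : β ∈ Rt.Φ) (hne : α ≠ β)
    (hpos : 0 < inner ℝ α β) : inner ℝ α β < ‖α‖ * ‖β‖ := by
  refine (real_inner_le_norm α β).lt_of_ne fun heq => ?_
  have hα0 : ‖α‖ ≠ 0 := norm_ne_zero_iff.2 (Rt.nonzero α hα)
  have hline : β ∈ Rt.Φ ∩ {x : V | ∃ t : ℝ, x = t • α} := by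
    refine ⟨hβ, ‖α‖⁻¹ * ‖β‖, ?_⟩
    rw [mul_smul, inner_eq_norm_mul_iff_real.1 heq, inv_smul_smul₀ hα0]
  rw [Rt.line α hα] at hline
  rcases hline with rfl | rfl
  · exact hne rfl
  · rw [inner_neg_right, real_inner_self_eq_norm_sq] at hpos
    nlinarith [sq_nonneg ‖α‖]

/-- Two distinct roots at an acute angle have Cartan integers `n, m ≥ 1` with `n * m < 4`
(strict Cauchy–Schwarz), so one of them is `1` and a reflection yields `±(α - β)`. -/
lemma sub_mem_of_inner_pos (hcr : Rt.IsCrystallographic) (hα : α ∈ Rt.Φ) (hβ : β ∈ Rt.Φ)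
    (hne : α ≠ β) (hpos : 0 < inner ℝ α β) : α - β ∈ Rt.Φ := by
  obtain ⟨n, hn⟩ := hcr α hα β hβ
  obtain ⟨m, hm⟩ := hcr β hβ α hα
  rw [real_inner_comm α β] at hm
  have hlt := Rt.inner_lt_norm_mul_norm hα hβ hne hpos
  have ha : 0 < ‖α‖ := norm_pos_iff.2 (Rt.nonzero α hα)
  have hb : 0 < ‖β‖ := norm_pos_iff.2 (Rt.nonzero β hβ)
  rw [real_inner_self_eq_norm_sq] at hn hm
  have hn0 : (0 : ℝ) < n := hn ▸ by positivity
  have hm0 : (0 : ℝ) < m := hm ▸ by positivity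
  have hnm : (n : ℝ) * m < 4 := by
    rw [← hn, ← hm, div_mul_div_comm, div_lt_iff₀ (by positivity)]
    nlinarith [mul_pos ha hb]
  have hone : n = 1 ∨ m = 1 := by
    have : 0 < n := by exact_mod_cast hn0
    have : 0 < m := by exact_mod_cast hm0
    have : n * m < 4 := by exact_mod_cast hnm
    rcases Int.lt_or_le 1 n with h | h <;> [right; left] <;> nlinarith
  rcases hone with rfl | rfl
  · simpa [real_inner_self_eq_norm_sq, hn] using Rt.neg_mem (Rt.reflect α hα β hβ)
  · simpa [real_inner_self_eq_norm_sq, real_inner_comm α β, hm] using Rt.reflect β hβ α hα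

lemma exists_eq_or_sub_mem_clos (hcr : Rt.IsCrystallographic) {T : Set V} (hT : T ⊆ Rt.Φ)
    (hγ : γ ∈ Rt.clos T) : ∃ β ∈ T, γ = β ∨ γ - β ∈ Rt.clos T := by
  classical
  obtain ⟨hγΦ, M, hMT, rfl⟩ := hγ
  obtain ⟨β, hβM, hpos⟩ : ∃ β ∈ M, 0 < inner ℝ M.sum β := by
    by_contra! h
    have hsum : inner ℝ M.sum M.sum ≤ 0 :=
      calc inner ℝ M.sum M.sum = (M.map (inner ℝ M.sum)).sum := by
            rw [← innerₛₗ_apply_apply, map_multiset_sum]; rfl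
        _ ≤ (M.map fun _ => (0 : ℝ)).sum := Multiset.sum_map_le_sum_map _ _ h
        _ = 0 := by simp
    exact Rt.nonzero _ hγΦ (real_inner_self_nonpos.1 hsum)
  refine ⟨β, hMT β hβM, or_iff_not_imp_left.2 fun hne => ?_⟩
  refine ⟨Rt.sub_mem_of_inner_pos hcr hγΦ (hT (hMT β hβM)) hne hpos, M.erase β,
    fun x hx => hMT x (Multiset.mem_of_mem_erase hx), ?_⟩
  rw [← Multiset.sum_erase hβM, add_sub_cancel_left]

end RootSys

lemma neg_notMem_inter_of_mem_union {E : Type*} [NormedAddCommGroup E] {R S : Set E}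
    (hR : IsAntisymSet R) (hS : IsAntisymSet S) {β : E} (hβ : β ∈ R ∪ S) : -β ∉ R ∩ S := fun h =>
  hβ.elim (fun hβR => hR β hβR h.1) (fun hβS => hS β hβS h.2)

namespace PosRootSys

variable (P : PosRootSys V) {α : V}

lemma neg_mem_Pos (hα : α ∈ P.Neg) : -α ∈ P.Pos :=
  ⟨P.neg_mem hα.1, by simpa using hα.2⟩

lemma neg_mem_Neg (hα : α ∈ P.Pos) : -α ∈ P.Neg :=
  ⟨P.neg_mem hα.1, by simpa using hα.2⟩

lemma disjoint_Pos_Neg : Disjoint P.Pos P.Neg :=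
  Set.disjoint_left.2 fun _ hpos hneg => (hpos.2.trans hneg.2).false

lemma clos_subset_Pos {A : Set V} (hA : A ⊆ P.Pos) : P.clos A ⊆ P.Pos := by
  rintro _ ⟨hγ, M, hMA, rfl⟩
  have hnonneg : 0 ≤ P.f M.sum := by
    rw [map_multiset_sum]
    exact Multiset.sum_nonneg fun _ hx => by
      obtain ⟨x, hxM, rfl⟩ := Multiset.mem_map.1 hx
      exact (hA (hMA x hxM)).2.le
  exact ⟨hγ, hnonneg.lt_of_ne (P.generic _ hγ).symm⟩

lemma isAntisymSet_of_neg_notMem {T : Set V} (hT : T ⊆ P.Φ)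
    (h : ∀ α ∈ T, α ∈ P.Neg → -α ∉ T) : IsAntisymSet T := by
  intro α hα hnα
  rcases (P.generic α (hT hα)).lt_or_gt with hneg | hpos
  · exact h α hα ⟨hT hα, hneg⟩ hnα
  · exact h (-α) hnα (P.neg_mem_Neg ⟨hT hα, hpos⟩) (by rwa [neg_neg])

lemma wmeet_isAntisymSet (hcr : P.IsCrystallographic) {R S : Set V} (hR : IsAntisymSet R)
    (hS : IsAntisymSet S) : IsAntisymSet (P.wmeet R S) := by
  set C := P.clos ((R ∪ S) ∩ P.Pos)
  have hC : C ⊆ P.Pos := P.clos_subset_Pos Set.inter_subset_right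
  set T := C ∪ (R ∩ S) ∩ P.Neg
  have hTΦ : T ⊆ P.Φ := Set.union_subset (hC.trans fun _ h => h.1) fun _ h => h.2.1
  refine P.isAntisymSet_of_neg_notMem (Set.sdiff_subset.trans hTΦ) ?_
  rintro α ⟨hαT, hα_kept⟩ hαNeg ⟨hnαT, -⟩
  have hαRS : α ∈ R ∩ S :=
    (hαT.resolve_left fun h => P.disjoint_Pos_Neg.notMem_of_mem_left (hC h) hαNeg).1
  have hnαC : -α ∈ C := hnαT.resolve_right fun h =>
    P.disjoint_Pos_Neg.notMem_of_mem_left (P.neg_mem_Pos hαNeg) h.2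
  obtain ⟨β, ⟨hβRS, hβPos⟩, rfl | hδC⟩ :=
    P.exists_eq_or_sub_mem_clos hcr (fun _ h => h.2.1) hnαC
  · exact neg_notMem_inter_of_mem_union hR hS hβRS (by rwa [neg_neg])
  · refine hα_kept ⟨⟨hαT, hαNeg⟩, {-α - β}, by simpa using ⟨Or.inl hδC, hC hδC⟩, ?_⟩
    rw [Finset.sum_singleton, id, show α + (-α - β) = -β by abel]
    refine ⟨P.neg_mem hβPos.1, ?_⟩
    rintro (h | h)
    · exact P.disjoint_Pos_Neg.notMem_of_mem_left (hC h) (P.neg_mem_Neg hβPos)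
    · exact neg_notMem_inter_of_mem_union hR hS hβRS h.1

def opp : PosRootSys V :=
  { P.toRootSys with
    f := -P.f
    generic := fun α hα => by simpa using P.generic α hα }

lemma opp_Pos : P.opp.Pos = P.Neg := by
  ext; simp [Pos, Neg, opp]

lemma opp_Neg : P.opp.Neg = P.Pos := by
  ext; simp [Pos, Neg, opp]

lemma wjoin_eq_opp_wmeet (R S : Set V) : P.wjoin R S = P.opp.wmeet R S := by
  simp only [wjoin, wmeet, ncd, pcd, opp_Pos, opp_Neg, Set.union_comm]
  rfl

end PosRootSys

theorem stmt14 (P : PosRootSys V) (hcr : P.toRootSys.IsCrystallographic)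
    (R S : Set V) (hR : P.toRootSys.IsPoset R) (hS : P.toRootSys.IsPoset S) :
    IsAntisymSet (P.wmeet R S) ∧ IsAntisymSet (P.wjoin R S) := by
  refine ⟨P.wmeet_isAntisymSet hcr hR.2.1 hS.2.1, ?_⟩
  rw [P.wjoin_eq_opp_wmeet]
  exact P.opp.wmeet_isAntisymSet hcr hR.2.1 hS.2.1
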